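/- Let r ≥ 0 and let G_1,…,G_N ∈ S = ℝ[x,y,z] be homogeneous forms of degrees n_1,…,n_N, each lying in ⟨x,y⟩, with nonzero linear parts L_1,…,L_N ∈ ℝ[x,y] at [0:0:1]. Suppose that the ideal I := ⟨L_1^{r+1},…,L_N^{r+1}⟩ is minimally generated by t of the powers L_i^{r+1} and that 2t ≥ r + 3. Then G_i^{r+1} ∈ I for every i; that is, ⟨G_1^{r+1},…,G_N^{r+1}⟩ ⊆ I. -/

import Mathlib

/-!
Write `L i = a_i x + b_i y`. Since the generators `L i ^ (r+1)` are forms of one degree, the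
minimal number of generators of `I` is the dimension of their `ℝ`-span, so some `t` of them are
linearly independent, and the corresponding `(a_i, b_i)` are pairwise non-proportional.

For such forms the products `L_i^{r+1} x`, `L_i^{r+1} y` span all binary forms of degree `r + 2`:
a functional `φ` killing them makes every `[a_i : b_i]` a double root of the binary form
`(u, v) ↦ φ((u x + v y)^{r+2})` of degree `r + 2`, which has at most `(r+2)/2 < t` double roots
unless it vanishes. Hence `⟨x, y⟩^{r+2} ⊆ I`.

Finally `G_i = L_i z^{n_i - 1} + H_i` with `H_i ∈ ⟨x, y⟩^2`, so in the binomial expansion of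
`G_i^{r+1}` every term other than `(L_i z^{n_i - 1})^{r+1} ∈ I` lies in `⟨x, y⟩^{r+2}`.
-/

open MvPolynomial

noncomputable section

abbrev PS := MvPolynomial (Fin 3) ℝ

/-- The coefficient of `z^c` in `G`, viewed as a polynomial in `z = X 2` with
coefficients in `ℝ[x,y]`. -/
def zCoeff (G : PS) (c : ℕ) : PS :=
  ∑ m ∈ G.support.filter (fun m => m 2 = c),
    monomial (m - Finsupp.single 2 c) (coeff m G)

/-- `dim_ℝ (I/mI)`, the minimal number of generators of `I`, realized as the dimension
of the image of `I` in `S ⧸ mI` where `m = ⟨x,y,z⟩`. -/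
def mingens (I : Ideal PS) : ℕ :=
  Module.finrank ℝ ↥(Submodule.map
    (Ideal.Quotient.mkₐ ℝ ((Ideal.span {X 0, X 1, X 2} : Ideal PS) * I)).toLinearMap
    (Submodule.restrictScalars ℝ (I : Submodule PS PS)))

theorem Ideal.span_pair_pow_le {R : Type*} [CommSemiring R] (a b : R) (d : ℕ) :
    Ideal.span {a, b} ^ d ≤ Ideal.span {p | ∃ i j, i + j = d ∧ p = a ^ i * b ^ j} := by
  induction d with
  | zero =>
    rw [pow_zero, Ideal.one_eq_top, top_le_iff, Ideal.eq_top_iff_one]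
    exact Ideal.subset_span ⟨0, 0, rfl, by simp⟩
  | succ d ih =>
    rw [pow_succ]
    refine (Ideal.mul_mono_left ih).trans ?_
    rw [Ideal.span_mul_span', Ideal.span_le]
    rintro _ ⟨_, ⟨i, j, rfl, rfl⟩, c, hc, rfl⟩
    rcases hc with rfl | rfl
    · exact Ideal.subset_span ⟨i + 1, j, by lia, by ring⟩
    · exact Ideal.subset_span ⟨i, j + 1, by lia, by ring⟩

theorem Ideal.add_pow_mem_of_mem_sq {R : Type*} [CommSemiring R] {K J : Ideal R} {A H : R}
    {k : ℕ} (hA : A ∈ K) (hH : H ∈ K ^ 2) (hAk : A ^ k ∈ J) (hK : K ^ (k + 1) ≤ J) :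
    (A + H) ^ k ∈ J := by
  rw [add_pow]
  refine J.sum_mem fun m hm => J.mul_mem_right _ ?_
  obtain rfl | hmk := eq_or_ne m k
  · simpa using hAk
  · have hmem : A ^ m * H ^ (k - m) ∈ K ^ (m + 2 * (k - m)) := by
      rw [pow_add, pow_mul]
      exact Ideal.mul_mem_mul (Ideal.pow_mem_pow hA m) (Ideal.pow_mem_pow hH _)
    exact hK (Ideal.pow_le_pow_right (by grind) hmem)

theorem Submodule.finrank_map_of_disjoint_ker {K V W : Type*} [DivisionRing K]
    [AddCommGroup V] [Module K V] [AddCommGroup W] [Module K W] (f : V →ₗ[K] W)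
    {p : Submodule K V} (h : Disjoint p (LinearMap.ker f)) :
    Module.finrank K (p.map f) = Module.finrank K p := by
  rw [← LinearMap.range_domRestrict,
    LinearMap.finrank_range_of_inj (LinearMap.injective_domRestrict_iff.mpr h)]

open Polynomial in
theorem Polynomial.eq_zero_of_natDegree_lt_two_mul_card {K : Type*} [Field K] [CharZero K]
    {q : K[X]} (S : Finset K) (hS : ∀ u ∈ S, q.IsRoot u ∧ (derivative q).IsRoot u)
    (hdeg : q.natDegree < 2 * S.card) : q = 0 := by
  classical
  by_contra hq
  have hle : S.val + S.val ≤ q.roots := by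
    refine Multiset.le_iff_count.mpr fun u => ?_
    rw [count_roots, Multiset.count_add]
    by_cases hu : u ∈ S
    · rw [Multiset.count_eq_one_of_mem S.nodup hu]
      exact (one_lt_rootMultiplicity_iff_isRoot hq).mpr (hS u hu)
    · simp [Multiset.count_eq_zero_of_notMem hu]
  have := (Multiset.card_le_card hle).trans (card_roots' q)
  simp only [Multiset.card_add, Finset.card_val] at this
  lia

namespace MvPolynomial

variable {σ R : Type*} [CommRing R]

theorem sub_C_constantCoeff_mem_idealOfVars (a : MvPolynomial σ R) :
    a - C (constantCoeff a) ∈ idealOfVars σ R := by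
  rw [← pow_one (idealOfVars σ R), mem_pow_idealOfVars_iff']
  intro m hm
  obtain rfl : m = 0 := (Finsupp.degree_eq_zero_iff m).mp (by lia)
  simp [constantCoeff_eq]

theorem restrictScalars_span_le_span_sup (s : Set (MvPolynomial σ R)) :
    (Ideal.span s).restrictScalars R ≤
      Submodule.span R s ⊔ (idealOfVars σ R * Ideal.span s).restrictScalars R := by
  intro p hp
  induction hp using Submodule.span_induction with
  | mem x hx => exact Submodule.mem_sup_left (Submodule.subset_span hx)
  | zero => exact zero_mem _
  | add x y _ _ hx hy => exact add_mem hx hy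
  | smul a x hx ih =>
    obtain ⟨w, hw, v, hv, rfl⟩ := Submodule.mem_sup.mp ih
    have hsplit : a • (w + v) =
        constantCoeff a • (w + v) + (a - C (constantCoeff a)) * (w + v) := by
      simp only [smul_eq_mul, smul_eq_C_mul]; ring
    rw [hsplit]
    exact add_mem (Submodule.smul_mem _ _ (add_mem (Submodule.mem_sup_left hw)
      (Submodule.mem_sup_right hv))) (Submodule.mem_sup_right
        (Ideal.mul_mem_mul (sub_C_constantCoeff_mem_idealOfVars a) hx))

theorem span_le_pow_idealOfVars {s : Set (MvPolynomial σ R)} {d : ℕ}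
    (hs : ∀ p ∈ s, p.IsHomogeneous d) : Ideal.span s ≤ idealOfVars σ R ^ d :=
  Ideal.span_le.mpr fun p hp => (mem_pow_idealOfVars_iff d p).mpr fun m hm =>
    (show m.degree = d by
      rw [Finsupp.degree_eq_weight_one]; exact hs p hp (mem_support_iff.mp hm)).ge

end MvPolynomial

theorem span_X_fin_three : (Ideal.span {X 0, X 1, X 2} : Ideal PS) = idealOfVars (Fin 3) ℝ := by
  congr 1
  ext p
  simp [Fin.exists_fin_succ, eq_comm]

theorem mingens_span_eq_finrank {ι : Type*} (f : ι → PS) {d : ℕ}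
    (hf : ∀ i, (f i).IsHomogeneous d) :
    mingens (Ideal.span (Set.range f)) = Module.finrank ℝ (Submodule.span ℝ (Set.range f)) := by
  set I := Ideal.span (Set.range f)
  set W := Submodule.span ℝ (Set.range f)
  set q := (Ideal.Quotient.mkₐ ℝ ((Ideal.span {X 0, X 1, X 2} : Ideal PS) * I)).toLinearMap
  have hker : LinearMap.ker q = (idealOfVars (Fin 3) ℝ * I).restrictScalars ℝ := by
    ext p
    simp only [q, LinearMap.mem_ker, AlgHom.toLinearMap_apply, Ideal.Quotient.mkₐ_eq_mk,
      Ideal.Quotient.eq_zero_iff_mem, Submodule.restrictScalars_mem, span_X_fin_three]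
  have hhom : Set.range f ⊆ homogeneousSubmodule (Fin 3) ℝ d := by
    rintro _ ⟨i, rfl⟩; exact hf i
  have hWI : W ≤ I.restrictScalars ℝ := Submodule.span_le.mpr fun p hp => Ideal.subset_span hp
  have hdisj : Disjoint W (LinearMap.ker q) := by
    refine Submodule.disjoint_def.mpr fun p hpW hpker => ?_
    have hpd : p.IsHomogeneous d := Submodule.span_le.mpr hhom hpW
    have hpm : p ∈ idealOfVars (Fin 3) ℝ ^ (d + 1) := by
      rw [hker] at hpker
      rw [pow_succ']
      exact Ideal.mul_mono_right (span_le_pow_idealOfVars fun p hp => hhom hp) hpker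
    ext m
    by_cases hm : m.degree ≤ d
    · exact (mem_pow_idealOfVars_iff' _ p).mp hpm m (by lia)
    · exact hpd.coeff_eq_zero (by lia)
  have hmap : (I.restrictScalars ℝ).map q = W.map q := by
    refine le_antisymm ?_ (Submodule.map_mono hWI)
    refine (Submodule.map_mono (restrictScalars_span_le_span_sup _)).trans ?_
    rw [Submodule.map_sup, ← hker, LinearMap.le_ker_iff_map.mp le_rfl, sup_bot_eq]
  rw [mingens, hmap, Submodule.finrank_map_of_disjoint_ker q hdisj]

local notation "𝔭" => (Ideal.span {X 0, X 1} : Ideal PS)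

theorem Finsupp.ext_iff_fin_three {m m' : Fin 3 →₀ ℕ} :
    m = m' ↔ m 0 = m' 0 ∧ m 1 = m' 1 ∧ m 2 = m' 2 := by
  simp [Finsupp.ext_iff, Fin.forall_fin_succ]

theorem coeff_zCoeff_mul_X_pow (G : PS) (c : ℕ) (m : Fin 3 →₀ ℕ) :
    coeff m (zCoeff G c * X 2 ^ c) = if m 2 = c then coeff m G else 0 := by
  classical
  have hterm : ∀ m' ∈ G.support.filter (fun m => m 2 = c),
      monomial (m' - Finsupp.single 2 c) (coeff m' G) * X 2 ^ c = monomial m' (coeff m' G) := by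
    intro m' hm'
    rw [X_pow_eq_monomial, monomial_mul, mul_one, tsub_add_cancel_of_le]
    exact Finsupp.single_le_iff.mpr (Finset.mem_filter.mp hm').2.ge
  rw [zCoeff, Finset.sum_mul, Finset.sum_congr rfl hterm, coeff_sum]
  simp only [coeff_monomial, Finset.sum_ite_eq', Finset.mem_filter, mem_support_iff]
  by_cases h : m 2 = c <;> by_cases h' : coeff m G = 0 <;> simp [h, h']

theorem exponents_of_mem_support {n : ℕ} {G : PS} (hG : G.IsHomogeneous n) (hvan : G ∈ 𝔭)
    {m : Fin 3 →₀ ℕ} (hm : m ∈ G.support) : m 0 + m 1 + m 2 = n ∧ 1 ≤ m 0 + m 1 := by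
  constructor
  · rw [← Fin.sum_univ_three, ← Finsupp.degree_eq_sum, Finsupp.degree_eq_weight_one]
    exact hG (mem_support_iff.mp hm)
  · rw [show ({X 0, X 1} : Set PS) = X '' {0, 1} by simp [Set.image_insert_eq]] at hvan
    obtain ⟨i, hi, hmi⟩ := mem_ideal_span_X_image.mp hvan m hm
    rcases hi with rfl | rfl <;> lia

theorem mem_span_X01_pow_of_support {p : PS} {k : ℕ} (h : ∀ m ∈ p.support, k ≤ m 0 + m 1) :
    p ∈ 𝔭 ^ k := by
  rw [← p.support_sum_monomial_coeff]
  refine Ideal.sum_mem _ fun m hm => ?_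
  have hX : ∀ i ∈ ({0, 1} : Set (Fin 3)), (X i : PS) ^ m i ∈ 𝔭 ^ m i := fun i hi =>
    Ideal.pow_mem_pow (Ideal.subset_span (by rcases hi with rfl | rfl <;> simp)) _
  have hmono : monomial m (coeff m p) =
      C (coeff m p) * X 2 ^ m 2 * (X 0 ^ m 0 * X 1 ^ m 1) := by
    rw [monomial_eq, Finsupp.prod_fintype _ _ (by simp), Fin.prod_univ_three]; ring
  rw [hmono]
  refine Ideal.mul_mem_left _ _ (Ideal.pow_le_pow_right (h m hm) ?_)
  rw [pow_add]
  exact Ideal.mul_mem_mul (hX 0 (by simp)) (hX 1 (by simp))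

theorem sub_zCoeff_mul_X_pow_mem_sq {n : ℕ} {G : PS} (hG : G.IsHomogeneous n) (hvan : G ∈ 𝔭) :
    G - zCoeff G (n - 1) * X 2 ^ (n - 1) ∈ 𝔭 ^ 2 := by
  refine mem_span_X01_pow_of_support fun m hm => ?_
  rw [mem_support_iff, coeff_sub, coeff_zCoeff_mul_X_pow] at hm
  split_ifs at hm with h2
  · simp at hm
  · have := exponents_of_mem_support hG hvan (mem_support_iff.mpr (by simpa using hm))
    lia

theorem exists_zCoeff_eq_linearForm {n : ℕ} {G : PS} (hG : G.IsHomogeneous n) (hvan : G ∈ 𝔭) :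
    ∃ a b : ℝ, zCoeff G (n - 1) = C a * X 0 + C b * X 1 := by
  set e₀ : Fin 3 →₀ ℕ := Finsupp.single 0 1 + Finsupp.single 2 (n - 1)
  set e₁ : Fin 3 →₀ ℕ := Finsupp.single 1 1 + Finsupp.single 2 (n - 1)
  refine ⟨coeff e₀ G, coeff e₁ G, mul_right_cancel₀ (pow_ne_zero (n - 1) (X_ne_zero 2)) ?_⟩
  have hX : ∀ i, (X i * X 2 ^ (n - 1) : PS) =
      monomial (Finsupp.single i 1 + Finsupp.single 2 (n - 1)) 1 := fun i => by
    rw [X_pow_eq_monomial, X, monomial_mul, mul_one]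
  ext m
  rw [coeff_zCoeff_mul_X_pow, add_mul, coeff_add, mul_assoc, mul_assoc, coeff_C_mul, coeff_C_mul,
    hX, hX, coeff_monomial, coeff_monomial]
  by_cases hm : m ∈ G.support ∧ m 2 = n - 1
  · have := exponents_of_mem_support hG hvan hm.1
    obtain rfl | rfl : m = e₀ ∨ m = e₁ := by
      simp only [Finsupp.ext_iff_fin_three, e₀, e₁]; simp; lia
    · simp [e₀, e₁, Finsupp.ext_iff_fin_three]
    · simp [e₀, e₁, Finsupp.ext_iff_fin_three]
  · have hzero : ∀ e : Fin 3 →₀ ℕ, e 2 = n - 1 → coeff e G * (if e = m then 1 else 0) = 0 := by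
      rintro e he
      split_ifs with h
      · subst h
        simpa [he] using hm
      · rw [mul_zero]
    rw [hzero e₀ (by simp [e₀]), hzero e₁ (by simp [e₁]), add_zero]
    split_ifs with h2
    · simpa [h2] using hm
    · rfl

theorem pow_mem_of_zCoeff_pow_mem {n k : ℕ} {G : PS} (hG : G.IsHomogeneous n) (hvan : G ∈ 𝔭)
    {J : Ideal PS} (hL : zCoeff G (n - 1) ^ k ∈ J) (hJ : 𝔭 ^ (k + 1) ≤ J) : G ^ k ∈ J := by
  obtain ⟨a, b, hab⟩ := exists_zCoeff_eq_linearForm hG hvan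
  have hLmem : zCoeff G (n - 1) ∈ 𝔭 := by
    rw [hab]
    exact add_mem (Ideal.mul_mem_left _ _ (Ideal.subset_span (by simp)))
      (Ideal.mul_mem_left _ _ (Ideal.subset_span (by simp)))
  have hpow := Ideal.add_pow_mem_of_mem_sq (Ideal.mul_mem_right (X 2 ^ (n - 1)) _ hLmem)
    (sub_zCoeff_mul_X_pow_mem_sq hG hvan) (by rw [mul_pow]; exact J.mul_mem_right _ hL) hJ
  rwa [add_sub_cancel] at hpow

section Apolar

open Polynomial (derivative)

variable (φ : PS →ₗ[ℝ] ℝ)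

/-- The binary form `(u, v) ↦ φ ((u x + v y) ^ d)` at `v = 1`, so that a root at `u = ∞`
shows up as a drop in degree. -/
def apolarPoly (d : ℕ) : Polynomial ℝ :=
  ∑ k ∈ Finset.range (d + 1),
    Polynomial.monomial k ((d.choose k : ℝ) * φ (X 0 ^ k * X 1 ^ (d - k)))

theorem coeff_apolarPoly (d k : ℕ) :
    (apolarPoly φ d).coeff k =
      if k ≤ d then (d.choose k : ℝ) * φ (X 0 ^ k * X 1 ^ (d - k)) else 0 := by
  simp [apolarPoly, Polynomial.coeff_monomial]

theorem eval_apolarPoly (d : ℕ) (u : ℝ) :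
    (apolarPoly φ d).eval u = φ ((C u * X 0 + X 1) ^ d) := by
  rw [apolarPoly, Polynomial.eval_finsetSum, add_pow, map_sum]
  refine Finset.sum_congr rfl fun k _ => ?_
  have hterm : (C u * X 0) ^ k * X 1 ^ (d - k) * (d.choose k : PS) =
      (u ^ k * d.choose k) • (X 0 ^ k * X 1 ^ (d - k)) := by
    rw [smul_eq_C_mul, map_mul, map_pow, map_natCast]; ring
  rw [Polynomial.eval_monomial, hterm, map_smul, smul_eq_mul]
  ring

theorem derivative_apolarPoly (d : ℕ) :
    derivative (apolarPoly φ (d + 1)) =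
      (d + 1 : ℝ) • apolarPoly (φ ∘ₗ LinearMap.mulRight ℝ (X 0)) d := by
  ext k
  rw [Polynomial.coeff_derivative, Polynomial.coeff_smul, coeff_apolarPoly, coeff_apolarPoly]
  by_cases hk : k ≤ d
  · have hchoose : ((d + 1).choose (k + 1) : ℝ) * (k + 1) = (d + 1) * d.choose k := by
      exact_mod_cast (Nat.add_one_mul_choose_eq d k).symm
    rw [if_pos (by lia), if_pos hk, LinearMap.comp_apply, LinearMap.mulRight_apply,
      Nat.add_sub_add_right, smul_eq_mul,
      show (X 0 ^ k * X 1 ^ (d - k) * X 0 : PS) = X 0 ^ (k + 1) * X 1 ^ (d - k) by ring]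
    linear_combination φ (X 0 ^ (k + 1) * X 1 ^ (d - k)) * hchoose
  · rw [if_neg (by lia), if_neg hk]; simp

theorem apolarPoly_isRoot_of_map_eq_zero {d : ℕ} {u : ℝ}
    (h0 : φ ((C u * X 0 + X 1) ^ d * X 0) = 0) (h1 : φ ((C u * X 0 + X 1) ^ d * X 1) = 0) :
    (apolarPoly φ (d + 1)).IsRoot u ∧ (derivative (apolarPoly φ (d + 1))).IsRoot u := by
  constructor
  · have hsplit : (C u * X 0 + X 1 : PS) ^ (d + 1) =
        u • ((C u * X 0 + X 1) ^ d * X 0) + (C u * X 0 + X 1) ^ d * X 1 := by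
      rw [smul_eq_C_mul]; ring
    rw [Polynomial.IsRoot, eval_apolarPoly, hsplit, map_add, map_smul, h0, h1, smul_zero,
      add_zero]
  · rw [Polynomial.IsRoot, derivative_apolarPoly, Polynomial.eval_smul, eval_apolarPoly,
      LinearMap.comp_apply, LinearMap.mulRight_apply, h0, smul_zero]

theorem natDegree_apolarPoly_le (d : ℕ) : (apolarPoly φ d).natDegree ≤ d :=
  Polynomial.natDegree_le_iff_coeff_eq_zero.mpr fun k hk => by
    rw [coeff_apolarPoly, if_neg (by lia)]

theorem natDegree_apolarPoly_le_of_map_eq_zero {d : ℕ} (h0 : φ (X 0 ^ (d + 1)) = 0)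
    (h1 : φ (X 0 ^ d * X 1) = 0) : (apolarPoly φ (d + 1)).natDegree ≤ d - 1 := by
  refine Polynomial.natDegree_le_iff_coeff_eq_zero.mpr fun k hk => ?_
  rw [coeff_apolarPoly]
  split_ifs with hkd
  · obtain rfl | rfl : k = d ∨ k = d + 1 := by lia
    · rw [show k + 1 - k = 1 by lia, pow_one, h1, mul_zero]
    · rw [Nat.sub_self, pow_zero, mul_one, h0, mul_zero]
  · rfl

end Apolar

theorem linearForm_pow_mul_eq_smul {a b : ℝ} (hb : b ≠ 0) (d : ℕ) (p : PS) :
    (C a * X 0 + C b * X 1) ^ d * p = b ^ d • ((C (a / b) * X 0 + X 1) ^ d * p) := by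
  have hfactor : (C a * X 0 + C b * X 1 : PS) = C b * (C (a / b) * X 0 + X 1) := by
    rw [mul_add, ← mul_assoc, ← map_mul, mul_div_cancel₀ _ hb]
  rw [smul_eq_C_mul, hfactor, mul_pow, map_pow, mul_assoc]

theorem apolarPoly_eq_zero {ι : Type*} [Fintype ι] {a b : ι → ℝ}
    (hne : ∀ i, a i ≠ 0 ∨ b i ≠ 0) (hdet : Pairwise fun i j => a i * b j ≠ a j * b i) {r : ℕ}
    (hcard : r + 3 ≤ 2 * Fintype.card ι) (φ : PS →ₗ[ℝ] ℝ)
    (h0 : ∀ i, φ ((C (a i) * X 0 + C (b i) * X 1) ^ (r + 1) * X 0) = 0)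
    (h1 : ∀ i, φ ((C (a i) * X 0 + C (b i) * X 1) ^ (r + 1) * X 1) = 0) :
    apolarPoly φ (r + 2) = 0 := by
  classical
  set F := Finset.univ.filter fun i => b i ≠ 0
  set S := F.image fun i => a i / b i
  have hS : ∀ u ∈ S, (apolarPoly φ (r + 2)).IsRoot u ∧
      (Polynomial.derivative (apolarPoly φ (r + 2))).IsRoot u := by
    simp only [S, F, Finset.mem_image, Finset.mem_filter, Finset.mem_univ, true_and]
    rintro _ ⟨i, hb, rfl⟩
    have hvan : ∀ p : PS, φ ((C (a i) * X 0 + C (b i) * X 1) ^ (r + 1) * p) = 0 →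
        φ ((C (a i / b i) * X 0 + X 1) ^ (r + 1) * p) = 0 := fun p hp =>
      (smul_eq_zero.mp (by rwa [← map_smul, ← linearForm_pow_mul_eq_smul hb])).resolve_left
        (pow_ne_zero (r + 1) hb)
    exact apolarPoly_isRoot_of_map_eq_zero φ (hvan _ (h0 i)) (hvan _ (h1 i))
  have hSF : S.card = F.card := by
    refine Finset.card_image_of_injOn fun i hi j hj hij => ?_
    by_contra hne
    exact hdet hne ((div_eq_div_iff (Finset.mem_filter.mp hi).2 (Finset.mem_filter.mp hj).2).mp hij)
  refine Polynomial.eq_zero_of_natDegree_lt_two_mul_card S hS ?_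
  by_cases hb : ∃ i₀, b i₀ = 0
  -- `[a i₀ : 0]` is a double root at infinity: it lowers the degree by two instead.
  · obtain ⟨i₀, hi₀⟩ := hb
    have ha : a i₀ ≠ 0 := (hne i₀).resolve_right (not_not.mpr hi₀)
    have hF : F = Finset.univ.erase i₀ := by
      ext j
      simp only [F, Finset.mem_filter, Finset.mem_univ, true_and, Finset.mem_erase, and_true]
      refine ⟨fun hj h => hj (h ▸ hi₀), fun hj hbj => hdet (Ne.symm hj) ?_⟩
      rw [hi₀, hbj, mul_zero, mul_zero]
    have hpow : ∀ p : PS, (C (a i₀) * X 0 + C (b i₀) * X 1) ^ (r + 1) * p =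
        a i₀ ^ (r + 1) • (X 0 ^ (r + 1) * p) := by
      intro p; rw [hi₀, smul_eq_C_mul]; simp only [map_zero, zero_mul, add_zero, map_pow]; ring
    have hvan : ∀ p : PS, φ ((C (a i₀) * X 0 + C (b i₀) * X 1) ^ (r + 1) * p) = 0 →
        φ (X 0 ^ (r + 1) * p) = 0 := fun p hp =>
      (smul_eq_zero.mp (by rwa [← map_smul, ← hpow])).resolve_left (pow_ne_zero _ ha)
    have hdeg := natDegree_apolarPoly_le_of_map_eq_zero φ (d := r + 1)
      (by rw [pow_succ]; exact hvan _ (h0 i₀)) (hvan _ (h1 i₀))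
    rw [hSF, hF, Finset.card_erase_of_mem (Finset.mem_univ _), Finset.card_univ]
    lia
  · push Not at hb
    have hF : F = Finset.univ := Finset.filter_true_of_mem fun i _ => hb i
    rw [hSF, hF, Finset.card_univ]
    have := natDegree_apolarPoly_le φ (r + 2)
    lia

theorem X_pow_mul_X_pow_mem_span_linearForm_pow {ι : Type*} [Fintype ι] {a b : ι → ℝ}
    (hne : ∀ i, a i ≠ 0 ∨ b i ≠ 0) (hdet : Pairwise fun i j => a i * b j ≠ a j * b i) {r : ℕ}
    (hcard : r + 3 ≤ 2 * Fintype.card ι) {k l : ℕ} (hkl : k + l = r + 2) :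
    (X 0 ^ k * X 1 ^ l : PS) ∈
      Ideal.span (Set.range fun i => (C (a i) * X 0 + C (b i) * X 1) ^ (r + 1)) := by
  set ℓ := fun i => (C (a i) * X 0 + C (b i) * X 1 : PS)
  set W := Submodule.span ℝ
    (Set.range (fun i => ℓ i ^ (r + 1) * X 0) ∪ Set.range (fun i => ℓ i ^ (r + 1) * X 1))
  have hW : W ≤ (Ideal.span (Set.range fun i => ℓ i ^ (r + 1))).restrictScalars ℝ := by
    refine Submodule.span_le.mpr (Set.union_subset ?_ ?_) <;>
    · rintro _ ⟨i, rfl⟩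
      exact Ideal.mul_mem_right _ _ (Ideal.subset_span ⟨i, rfl⟩)
  refine hW (not_not.mp fun hnot => ?_)
  obtain ⟨φ, hφ, hφW⟩ := Submodule.exists_dual_map_eq_bot_of_notMem hnot inferInstance
  have hvan : ∀ y ∈ W, φ y = 0 := fun y hy =>
    (Submodule.mem_bot ℝ).mp (hφW ▸ Submodule.mem_map_of_mem hy)
  have hzero := apolarPoly_eq_zero hne hdet hcard φ
    (fun i => hvan _ (Submodule.subset_span (Or.inl ⟨i, rfl⟩)))
    (fun i => hvan _ (Submodule.subset_span (Or.inr ⟨i, rfl⟩)))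
  have hcoeff := coeff_apolarPoly φ (r + 2) k
  rw [hzero, Polynomial.coeff_zero, if_pos (by lia), show r + 2 - k = l by lia, eq_comm,
    mul_eq_zero] at hcoeff
  exact hφ (hcoeff.resolve_left (Nat.cast_ne_zero.mpr (Nat.choose_pos (by lia)).ne'))

theorem pairwise_det_ne_zero_of_linearIndependent {ι : Type*} {a b : ι → ℝ}
    (hne : ∀ i, a i ≠ 0 ∨ b i ≠ 0) {d : ℕ}
    (hli : LinearIndependent ℝ fun i => (C (a i) * X 0 + C (b i) * X 1 : PS) ^ d) :
    Pairwise fun i j => a i * b j ≠ a j * b i := by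
  intro i j hij hdet
  set ℓ := fun i => (C (a i) * X 0 + C (b i) * X 1 : PS)
  have hpair : LinearIndependent ℝ ![ℓ i ^ d, ℓ j ^ d] := by
    convert hli.comp ![i, j] fun x y hxy => ?_ using 1
    · ext x; fin_cases x <;> rfl
    · fin_cases x <;> fin_cases y <;> simp_all [eq_comm]
  have hzero : ∀ c c' : ℝ, c • ℓ i = c' • ℓ j → c = 0 := fun c c' h =>
    eq_zero_of_pow_eq_zero (hpair.eq_zero_of_pair' (s := c ^ d) (t := c' ^ d)
      (by rw [← smul_pow, ← smul_pow, h])).1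
  have hdet' : C (a i) * C (b j) = (C (a j) * C (b i) : PS) := by
    rw [← map_mul, ← map_mul, hdet]
  have hb : b j = 0 := hzero (b j) (b i) (by
    simp only [ℓ, smul_eq_C_mul]; linear_combination X 0 * hdet')
  have ha : a j = 0 := hzero (a j) (a i) (by
    simp only [ℓ, smul_eq_C_mul]; linear_combination -X 1 * hdet')
  exact (hne j).elim (· ha) (· hb)

theorem span_X01_pow_le_span_linearForm_pow {ι : Type*} [Fintype ι] {a b : ι → ℝ}
    (hne : ∀ i, a i ≠ 0 ∨ b i ≠ 0) {r : ℕ}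
    (hli : LinearIndependent ℝ fun i => (C (a i) * X 0 + C (b i) * X 1 : PS) ^ (r + 1))
    (hcard : r + 3 ≤ 2 * Fintype.card ι) :
    𝔭 ^ (r + 2) ≤ Ideal.span (Set.range fun i => (C (a i) * X 0 + C (b i) * X 1) ^ (r + 1)) := by
  refine (Ideal.span_pair_pow_le _ _ _).trans (Ideal.span_le.mpr ?_)
  rintro _ ⟨k, l, hkl, rfl⟩
  exact X_pow_mul_X_pow_mem_span_linearForm_pow hne
    (pairwise_det_ne_zero_of_linearIndependent hne hli) hcard hkl

theorem isHomogeneous_linearForm_pow (a b : ℝ) (d : ℕ) :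
    ((C a * X 0 + C b * X 1 : PS) ^ d).IsHomogeneous d := by
  simpa using (((isHomogeneous_X ℝ 0).C_mul a).add ((isHomogeneous_X ℝ 1).C_mul b)).pow d

theorem low_powers_containment
    (r N : ℕ) (n : Fin N → ℕ)
    (G : Fin N → PS)
    (hhom : ∀ i, (G i).IsHomogeneous (n i))
    (hvan : ∀ i, G i ∈ (Ideal.span {X 0, X 1} : Ideal PS))
    (L : Fin N → PS) (hL : ∀ i, L i = zCoeff (G i) (n i - 1))
    (hLne : ∀ i, L i ≠ 0)
    (I : Ideal PS)
    (hI : I = Ideal.span (Set.range fun i => L i ^ (r + 1)))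
    (t : ℕ) (hmin : mingens I = t) (h2t : r + 3 ≤ 2 * t) :
    (∀ i, G i ^ (r + 1) ∈ I) ∧
      Ideal.span (Set.range fun i => G i ^ (r + 1)) ≤ I := by
  have hform : ∀ i, ∃ a b : ℝ, L i = C a * X 0 + C b * X 1 := fun i => by
    rw [hL i]; exact exists_zCoeff_eq_linearForm (hhom i) (hvan i)
  choose a b hab using hform
  have hne : ∀ i, a i ≠ 0 ∨ b i ≠ 0 := fun i => by
    by_contra! h
    exact hLne i (by rw [hab i, h.1, h.2]; simp)
  have hhomL : ∀ i, (L i ^ (r + 1)).IsHomogeneous (r + 1) := fun i => by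
    rw [hab i]; exact isHomogeneous_linearForm_pow _ _ _
  obtain ⟨κ, e, he, hspan, hli⟩ := exists_linearIndependent' ℝ fun i => L i ^ (r + 1)
  have : Fintype κ := Fintype.ofInjective e he
  have hcard : r + 3 ≤ 2 * Fintype.card κ := by
    rwa [← finrank_span_eq_card hli, hspan, ← mingens_span_eq_finrank _ hhomL, ← hI, hmin]
  simp only [Function.comp_def, hab] at hli
  have hmono : 𝔭 ^ (r + 2) ≤ I := by
    refine (span_X01_pow_le_span_linearForm_pow (fun k => hne (e k)) hli hcard).trans ?_
    rw [hI]
    exact Ideal.span_mono (by rintro _ ⟨k, rfl⟩; exact ⟨e k, by simp only [hab]⟩)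
  have hmem : ∀ i, G i ^ (r + 1) ∈ I := fun i => by
    refine pow_mem_of_zCoeff_pow_mem (hhom i) (hvan i) ?_ hmono
    rw [← hL i, hI]
    exact Ideal.subset_span ⟨i, rfl⟩
  exact ⟨hmem, Ideal.span_le.mpr (Set.range_subset_iff.mpr hmem)⟩

end
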